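/- arXiv:math/0106182 — 6 statements merged into one kernel-verified Lean document; each statement's English description precedes it below -/
import Mathlib

section
/- Let n ≥ 2. Define Φ on {z ∈ ℂⁿ : z₁ ≠ −1} by Φ(z)₁ = (z₁−1)/(z₁+1) and Φ(z)_k = √2·z_k/(z₁+1)^{1/2} for 2 ≤ k ≤ n, where (z₁+1)^{1/2} is the principal branch of the complex square root. Then for every z ∈ ℂⁿ with z₁ ≠ −1: (a) |Φ(z)₁|² + ∑_{k=2}^n |Φ(z)_k|⁴ < 1 if and only if Re z₁ > ∑_{k=2}^n |z_k|⁴; and (b) |Φ(z)₁|² + ∑_{k=2}^n |Φ(z)_k|⁴ = 1 if and only if Re z₁ = ∑_{k=2}^n |z_k|⁴. In particular Φ maps ω = {z : Re z₁ > ∑_{k=2}^n |z_k|⁴} into Ω = {w : |w₁|² + ∑_{k=2}^n |w_k|⁴ < 1} and maps ∂ω into ∂Ω. -/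
open Complex Finset

/-- The biholomorphism `Φ` between the unbounded model `ω` and the bounded domain `Ω`:
`Φ(z)₁ = (z₁-1)/(z₁+1)` and `Φ(z)_k = √2 · z_k / (z₁+1)^{1/2}` for `k ≥ 2`,
using the principal branch of the complex square root (`Complex.cpow`). -/
noncomputable def PhiMap (n : ℕ) (z : Fin (n + 2) → ℂ) : Fin (n + 2) → ℂ :=
  fun k =>
    if k = 0 then (z 0 - 1) / (z 0 + 1)
    else ((Real.sqrt 2 : ℝ) : ℂ) * z k / ((z 0 + 1) ^ ((1 : ℂ) / 2))

/-- For every `z` with `z₁ ≠ -1`: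
(a) `|Φ(z)₁|² + ∑_{k≥2} |Φ(z)_k|⁴ < 1 ↔ Re z₁ > ∑_{k≥2} |z_k|⁴`, and
(b) `|Φ(z)₁|² + ∑_{k≥2} |Φ(z)_k|⁴ = 1 ↔ Re z₁ = ∑_{k≥2} |z_k|⁴`.
In particular `Φ` maps `ω` into `Ω` and `∂ω` into `∂Ω`. -/
theorem stmt_0 (n : ℕ) (z : Fin (n + 2) → ℂ) (hz : z 0 ≠ -1) :
    (‖PhiMap n z 0‖ ^ 2
        + ∑ k ∈ Finset.univ.erase (0 : Fin (n + 2)), ‖PhiMap n z k‖ ^ 4 < 1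
      ↔ (∑ k ∈ Finset.univ.erase (0 : Fin (n + 2)), ‖z k‖ ^ 4) < (z 0).re) ∧
    (‖PhiMap n z 0‖ ^ 2
        + ∑ k ∈ Finset.univ.erase (0 : Fin (n + 2)), ‖PhiMap n z k‖ ^ 4 = 1
      ↔ (z 0).re = ∑ k ∈ Finset.univ.erase (0 : Fin (n + 2)), ‖z k‖ ^ 4) := by
  set w := z 0 with hw
  have hne : w + 1 ≠ 0 := by
    intro h
    exact hz (by linear_combination h)
  have ha : 0 < ‖w + 1‖ := norm_pos_iff.mpr hne
  set a : ℝ := ‖w + 1‖ with hadef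
  have ha2 : 0 < a ^ 2 := by positivity
  -- abs of the half power
  have hhalf : ‖(w + 1) ^ ((1 : ℂ) / 2)‖ = a ^ ((1 : ℝ) / 2) := by
    rw [Complex.norm_cpow_of_ne_zero hne]
    norm_num
    rfl
  have hhalfpow : (a ^ ((1 : ℝ) / 2)) ^ 4 = a ^ 2 := by
    rw [← Real.rpow_natCast (a ^ ((1:ℝ)/2)) 4, ← Real.rpow_mul ha.le]
    norm_num
  -- value at 0
  have h0 : ‖PhiMap n z 0‖ = ‖w - 1‖ / a := by
    simp [PhiMap, norm_div, ← hw]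
    rfl
  -- values at k ≠ 0
  have hk : ∀ k ∈ Finset.univ.erase (0 : Fin (n + 2)),
      ‖PhiMap n z k‖ ^ 4 = 4 * ‖z k‖ ^ 4 / a ^ 2 := by
    intro k hkmem
    have hk0 : k ≠ 0 := (Finset.mem_erase.mp hkmem).1
    have : ‖PhiMap n z k‖
        = Real.sqrt 2 * ‖z k‖ / a ^ ((1 : ℝ) / 2) := by
      simp only [PhiMap, if_neg hk0, norm_div, norm_mul, Complex.norm_real, Real.norm_eq_abs, ← hw, hhalf]
      rw [_root_.abs_of_nonneg (Real.sqrt_nonneg 2)]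
    rw [this]
    rw [div_pow, mul_pow, hhalfpow]
    have : (Real.sqrt 2) ^ 4 = 4 := by
      have h2 : Real.sqrt 2 ^ 2 = 2 := Real.sq_sqrt (by norm_num)
      nlinarith
    rw [this]
  rw [Finset.sum_congr rfl hk, h0]
  set S : ℝ := ∑ k ∈ Finset.univ.erase (0 : Fin (n + 2)), ‖z k‖ ^ 4 with hS
  have hsum : ∑ k ∈ Finset.univ.erase (0 : Fin (n + 2)),
      4 * ‖z k‖ ^ 4 / a ^ 2 = 4 * S / a ^ 2 := by
    rw [hS, Finset.mul_sum, Finset.sum_div]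
  rw [hsum]
  have key : a ^ 2 = ‖w - 1‖ ^ 2 + 4 * w.re := by
    rw [hadef, Complex.sq_norm, Complex.sq_norm, Complex.normSq_apply, Complex.normSq_apply]
    simp [Complex.add_re, Complex.add_im, Complex.sub_re, Complex.sub_im]
    ring
  have hexpr : (‖w - 1‖ / a) ^ 2 + 4 * S / a ^ 2
      = (‖w - 1‖ ^ 2 + 4 * S) / a ^ 2 := by
    rw [div_pow, ← add_div]
  rw [hexpr]
  constructor
  · rw [div_lt_one ha2, key]
    constructor <;> intro h <;> nlinarith
  · rw [div_eq_one_iff_eq (ne_of_gt ha2), key]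
    constructor <;> intro h <;> nlinarith
end

section
/- Let ρ : ℂ⁴ → ℝ be ρ(z) = |z₂|⁴ + |z₃|⁴ + |z₄|⁴ − Re z₁ and γ(θ) = (sin⁴θ + cos⁴θ + 1, 1, sin θ, cos θ). Then for every θ ∈ ℝ the Levi form of ρ at γ(θ) evaluated on the vector i·γ′(θ) equals L_ρ(γ(θ))(i·γ′(θ)) = 8·sin²θ·cos²θ. In particular this Levi form vanishes at θ = 0, so the positivity condition (strict positivity of the Levi form on i·times the tangent directions of the curve) fails at γ(0). -/
open Complex

/-- The (1,0)-differential `∂ρ(p)(ξ) = (1/2)(Dρ(p)(ξ) - i·Dρ(p)(iξ))`, where `Dρ(p)` is the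
real Fréchet derivative of `ρ` at `p`. -/
noncomputable def delForm {E : Type*} [NormedAddCommGroup E] [NormedSpace ℂ E]
    (ρ : E → ℝ) (p ξ : E) : ℂ :=
  (1 / 2 : ℂ) * (((fderiv ℝ ρ p ξ : ℝ) : ℂ)
    - Complex.I * ((fderiv ℝ ρ p (Complex.I • ξ) : ℝ) : ℂ))

/-- The Levi form `L_ρ(p)(ξ) = (1/4)(D²ρ(p)(ξ,ξ) + D²ρ(p)(iξ,iξ))`, where `D²ρ(p)` is the
second real Fréchet derivative of `ρ` at `p`. -/
noncomputable def leviForm {E : Type*} [NormedAddCommGroup E] [NormedSpace ℂ E]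
    (ρ : E → ℝ) (p ξ : E) : ℝ :=
  (1 / 4 : ℝ) * (iteratedFDeriv ℝ 2 ρ p ![ξ, ξ]
    + iteratedFDeriv ℝ 2 ρ p ![Complex.I • ξ, Complex.I • ξ])

noncomputable def Rc (j : Fin 4) : (Fin 4 → ℂ) →L[ℝ] ℝ :=
  Complex.reCLM.comp (ContinuousLinearMap.proj j)
noncomputable def Ic (j : Fin 4) : (Fin 4 → ℂ) →L[ℝ] ℝ :=
  Complex.imCLM.comp (ContinuousLinearMap.proj j)

@[simp] lemma Rc_apply (j : Fin 4) (z : Fin 4 → ℂ) : Rc j z = (z j).re := rfl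
@[simp] lemma Ic_apply (j : Fin 4) (z : Fin 4 → ℂ) : Ic j z = (z j).im := rfl

noncomputable def f : (Fin 4 → ℂ) → ℝ := fun z =>
  ((z 1).re * (z 1).re + (z 1).im * (z 1).im) * ((z 1).re * (z 1).re + (z 1).im * (z 1).im)
  + ((z 2).re * (z 2).re + (z 2).im * (z 2).im) * ((z 2).re * (z 2).re + (z 2).im * (z 2).im)
  + ((z 3).re * (z 3).re + (z 3).im * (z 3).im) * ((z 3).re * (z 3).re + (z 3).im * (z 3).im)
  - (z 0).re

lemma hr (j : Fin 4) (p : Fin 4 → ℂ) :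
    HasFDerivAt (fun z : Fin 4 → ℂ => (z j).re) (Rc j) p := (Rc j).hasFDerivAt
lemma hi (j : Fin 4) (p : Fin 4 → ℂ) :
    HasFDerivAt (fun z : Fin 4 → ℂ => (z j).im) (Ic j) p := (Ic j).hasFDerivAt

lemma fderiv_f (p v : Fin 4 → ℂ) :
    fderiv ℝ f p v =
      4 * ((p 1).re * (p 1).re + (p 1).im * (p 1).im) * ((p 1).re * (v 1).re + (p 1).im * (v 1).im)
      + 4 * ((p 2).re * (p 2).re + (p 2).im * (p 2).im) * ((p 2).re * (v 2).re + (p 2).im * (v 2).im)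
      + 4 * ((p 3).re * (p 3).re + (p 3).im * (p 3).im) * ((p 3).re * (v 3).re + (p 3).im * (v 3).im)
      - (v 0).re := by
  have hN : ∀ j : Fin 4, HasFDerivAt
      (fun z : Fin 4 → ℂ => (z j).re * (z j).re + (z j).im * (z j).im)
      (((p j).re • Rc j + (p j).re • Rc j) + ((p j).im • Ic j + (p j).im • Ic j)) p :=
    fun j => ((hr j p).mul (hr j p)).add ((hi j p).mul (hi j p))
  have H := ((((hN 1).mul (hN 1)).add ((hN 2).mul (hN 2))).add ((hN 3).mul (hN 3))).sub (hr 0 p)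
  rw [show f = (fun z : Fin 4 → ℂ =>
      ((z 1).re * (z 1).re + (z 1).im * (z 1).im) * ((z 1).re * (z 1).re + (z 1).im * (z 1).im)
      + ((z 2).re * (z 2).re + (z 2).im * (z 2).im) * ((z 2).re * (z 2).re + (z 2).im * (z 2).im)
      + ((z 3).re * (z 3).re + (z 3).im * (z 3).im) * ((z 3).re * (z 3).re + (z 3).im * (z 3).im)
      - (z 0).re) from rfl]
  erw [H.fderiv]
  simp only [ContinuousLinearMap.add_apply, ContinuousLinearMap.coe_sub',
    ContinuousLinearMap.smul_apply, Pi.sub_apply, Rc_apply, Ic_apply, smul_eq_mul]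
  ring

lemma contDiff_f : ContDiff ℝ 2 f := by
  have cr : ∀ j : Fin 4, ContDiff ℝ 2 (fun z : Fin 4 → ℂ => (z j).re) :=
    fun j => (Rc j).contDiff
  have ci : ∀ j : Fin 4, ContDiff ℝ 2 (fun z : Fin 4 → ℂ => (z j).im) :=
    fun j => (Ic j).contDiff
  have cN : ∀ j : Fin 4, ContDiff ℝ 2
      (fun z : Fin 4 → ℂ => (z j).re * (z j).re + (z j).im * (z j).im) :=
    fun j => ((cr j).mul (cr j)).add ((ci j).mul (ci j))
  exact ((((cN 1).mul (cN 1)).add ((cN 2).mul (cN 2))).add ((cN 3).mul (cN 3))).sub (cr 0)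

lemma fderiv2_f (p u v : Fin 4 → ℂ) :
    iteratedFDeriv ℝ 2 f p ![u, v] =
      (8 * ((p 1).re * (u 1).re + (p 1).im * (u 1).im) * ((p 1).re * (v 1).re + (p 1).im * (v 1).im)
        + 4 * ((p 1).re * (p 1).re + (p 1).im * (p 1).im) * ((u 1).re * (v 1).re + (u 1).im * (v 1).im))
      + (8 * ((p 2).re * (u 2).re + (p 2).im * (u 2).im) * ((p 2).re * (v 2).re + (p 2).im * (v 2).im)
        + 4 * ((p 2).re * (p 2).re + (p 2).im * (p 2).im) * ((u 2).re * (v 2).re + (u 2).im * (v 2).im))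
      + (8 * ((p 3).re * (u 3).re + (p 3).im * (u 3).im) * ((p 3).re * (v 3).re + (p 3).im * (v 3).im)
        + 4 * ((p 3).re * (p 3).re + (p 3).im * (p 3).im) * ((u 3).re * (v 3).re + (u 3).im * (v 3).im)) := by
  rw [iteratedFDeriv_two_apply]
  have hd : DifferentiableAt ℝ (fderiv ℝ f) p :=
    ((contDiff_f.fderiv_right (m := 1) (by norm_num)).differentiable one_ne_zero).differentiableAt
  have hflip := fderiv_clm_apply hd (differentiableAt_const v)
  rw [fderiv_fun_const] at hflip
  simp only [Pi.zero_apply, ContinuousLinearMap.comp_zero, zero_add] at hflip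
  have key : fderiv ℝ (fun y => (fderiv ℝ f y) v) p u = fderiv ℝ (fderiv ℝ f) p (![u,v] 0) (![u,v] 1) := by
    rw [hflip]
    simp [ContinuousLinearMap.flip_apply]
  rw [← key]
  have heq : (fun y => (fderiv ℝ f y) v) = (fun y : Fin 4 → ℂ =>
      (4 * ((y 1).re * (y 1).re + (y 1).im * (y 1).im)) * ((y 1).re * (v 1).re + (y 1).im * (v 1).im)
      + (4 * ((y 2).re * (y 2).re + (y 2).im * (y 2).im)) * ((y 2).re * (v 2).re + (y 2).im * (v 2).im)
      + (4 * ((y 3).re * (y 3).re + (y 3).im * (y 3).im)) * ((y 3).re * (v 3).re + (y 3).im * (v 3).im)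
      - (v 0).re) := by
    funext y; rw [fderiv_f]
  rw [heq]
  have hM : ∀ j : Fin 4, HasFDerivAt
      (fun y : Fin 4 → ℂ => (y j).re * (v j).re + (y j).im * (v j).im)
      ((v j).re • Rc j + (v j).im • Ic j) p :=
    fun j => ((hr j p).mul_const (v j).re).add ((hi j p).mul_const (v j).im)
  have hN : ∀ j : Fin 4, HasFDerivAt
      (fun z : Fin 4 → ℂ => (z j).re * (z j).re + (z j).im * (z j).im)
      (((p j).re • Rc j + (p j).re • Rc j) + ((p j).im • Ic j + (p j).im • Ic j)) p :=
    fun j => ((hr j p).mul (hr j p)).add ((hi j p).mul (hi j p))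
  have H := (((((hN 1).const_mul 4).mul (hM 1)).add
      ((((hN 2).const_mul 4)).mul (hM 2))).add
      ((((hN 3).const_mul 4)).mul (hM 3))).sub_const ((v 0).re)
  erw [H.fderiv]
  simp only [ContinuousLinearMap.add_apply, ContinuousLinearMap.smul_apply, Rc_apply, Ic_apply,
    smul_eq_mul]
  ring


/-- Along the curve `γ(θ) = (sin⁴θ + cos⁴θ + 1, 1, sin θ, cos θ)` in
`∂ω = {|z₂|⁴ + |z₃|⁴ + |z₄|⁴ = Re z₁}`, the Levi form of `ρ` evaluated on `i·γ'(θ)` equals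
`8 sin²θ cos²θ`; in particular it vanishes at `θ = 0`, so the positivity condition fails. -/
theorem stmt_5 (ρ : (Fin 4 → ℂ) → ℝ)
    (hρ : ∀ z : Fin 4 → ℂ,
      ρ z = (‖z 1‖) ^ 4 + (‖z 2‖) ^ 4 + (‖z 3‖) ^ 4
              - (z 0).re)
    (γ : ℝ → Fin 4 → ℂ)
    (hγ : ∀ θ : ℝ, γ θ =
      ![((Real.sin θ ^ 4 + Real.cos θ ^ 4 + 1 : ℝ) : ℂ), 1,
        ((Real.sin θ : ℝ) : ℂ), ((Real.cos θ : ℝ) : ℂ)])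
    (γ' : ℝ → Fin 4 → ℂ)
    (hγ' : ∀ θ : ℝ, γ' θ =
      ![((4 * Real.sin θ ^ 3 * Real.cos θ - 4 * Real.cos θ ^ 3 * Real.sin θ : ℝ) : ℂ), 0,
        ((Real.cos θ : ℝ) : ℂ), ((-Real.sin θ : ℝ) : ℂ)]) :
    (∀ θ : ℝ, leviForm ρ (γ θ) (Complex.I • γ' θ) = 8 * Real.sin θ ^ 2 * Real.cos θ ^ 2) ∧
    leviForm ρ (γ 0) (Complex.I • γ' 0) = 0 := by
  have hρf : ρ = f := by
    funext z
    rw [hρ z]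
    have habs : ∀ w : ℂ, ‖w‖ ^ 4
        = (w.re * w.re + w.im * w.im) * (w.re * w.re + w.im * w.im) := by
      intro w
      rw [show ‖w‖ ^ 4 = ‖w‖ ^ 2 * ‖w‖ ^ 2 by ring,
        Complex.sq_norm, Complex.normSq_apply]
    rw [habs, habs, habs]
    rfl
  have key : ∀ θ : ℝ, leviForm ρ (γ θ) (Complex.I • γ' θ)
      = 8 * Real.sin θ ^ 2 * Real.cos θ ^ 2 := by
    intro θ
    unfold leviForm
    rw [hρf, fderiv2_f, fderiv2_f, hγ θ, hγ' θ]
    simp only [Pi.smul_apply, smul_eq_mul, Matrix.cons_val_zero, Matrix.cons_val_one,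
      Matrix.head_cons, Matrix.cons_val_two, Matrix.tail_cons, Matrix.cons_val_three,
      Complex.mul_re, Complex.mul_im, Complex.I_re, Complex.I_im, Complex.ofReal_re,
      Complex.ofReal_im, Complex.one_re, Complex.one_im, Complex.zero_re, Complex.zero_im]
    ring
  exact ⟨key, by rw [key 0]; simp⟩
end

section
/- Let γ(θ) = (sin⁴θ + cos⁴θ + 1, 1, sin θ, cos θ) for θ ∈ ℝ, and let Γ(ζ) = (sin⁴ζ + cos⁴ζ + 1, 1, sin ζ, cos ζ) for ζ ∈ ℂ be its complexification (with the complex sine and cosine). Then for every η ∈ ℝ: Re(Γ₁(iη)) = 1 + |sin(iη)|⁴ + |cos(iη)|⁴ (indeed both sides equal cosh⁴η + sinh⁴η + 1), so Γ(iη) lies on the hypersurface {z ∈ ℂ⁴ : Re z₁ = ∑_{k=2}^4 |z_k|⁴} = ∂ω; moreover, for every η ≠ 0 and every θ ∈ ℝ one has Γ(iη) ≠ γ(θ). Hence the complexification of the curve γ meets the closure of ω = {Re z₁ > ∑_{k=2}^4 |z_k|⁴} at points arbitrarily close to γ(0) that are not on the curve itself. -/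
open Complex

/-- Let `γ(θ) = (sin⁴θ + cos⁴θ + 1, 1, sin θ, cos θ)` and let
`Γ(ζ) = (sin⁴ζ + cos⁴ζ + 1, 1, sin ζ, cos ζ)` be its complexification. Then for every
`η ∈ ℝ`, `Re Γ₁(iη) = 1 + |sin(iη)|⁴ + |cos(iη)|⁴` (both sides equal
`cosh⁴η + sinh⁴η + 1`), so `Γ(iη)` lies on `{Re z₁ = ∑ |z_k|⁴} = ∂ω`; for `η ≠ 0`,
`Γ(iη) ≠ γ(θ)` for all real `θ`; and the complexification meets the closure of `ω` at
points arbitrarily close to `γ(0)` not on the curve itself. -/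
theorem stmt_6 (γ : ℝ → Fin 4 → ℂ)
    (hγ : ∀ θ : ℝ, γ θ =
      ![((Real.sin θ ^ 4 + Real.cos θ ^ 4 + 1 : ℝ) : ℂ), 1,
        ((Real.sin θ : ℝ) : ℂ), ((Real.cos θ : ℝ) : ℂ)])
    (Γ : ℂ → Fin 4 → ℂ)
    (hΓ : ∀ ζ : ℂ, Γ ζ =
      ![Complex.sin ζ ^ 4 + Complex.cos ζ ^ 4 + 1, 1, Complex.sin ζ, Complex.cos ζ]) :
    (∀ η : ℝ,
      (Γ (Complex.I * η) 0).re
          = 1 + (‖Complex.sin (Complex.I * η)‖) ^ 4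
              + (‖Complex.cos (Complex.I * η)‖) ^ 4 ∧
      (Γ (Complex.I * η) 0).re = Real.cosh η ^ 4 + Real.sinh η ^ 4 + 1 ∧
      1 + (‖Complex.sin (Complex.I * η)‖) ^ 4
          + (‖Complex.cos (Complex.I * η)‖) ^ 4
        = Real.cosh η ^ 4 + Real.sinh η ^ 4 + 1 ∧
      (Γ (Complex.I * η) 0).re
        = (‖Γ (Complex.I * η) 1‖) ^ 4 + (‖Γ (Complex.I * η) 2‖) ^ 4
            + (‖Γ (Complex.I * η) 3‖) ^ 4) ∧
    (∀ η : ℝ, η ≠ 0 → ∀ θ : ℝ, Γ (Complex.I * η) ≠ γ θ) ∧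
    (∀ ε : ℝ, 0 < ε → ∃ η : ℝ, η ≠ 0 ∧ dist (Γ (Complex.I * η)) (γ 0) < ε) := by
  have hIη : ∀ η : ℝ, Complex.I * (η : ℂ) = (η : ℂ) * Complex.I := fun η => mul_comm _ _
  have hsin : ∀ η : ℝ, Complex.sin (Complex.I * η) = (Real.sinh η : ℂ) * Complex.I := by
    intro η; rw [hIη, Complex.sin_mul_I, Complex.ofReal_sinh]
  have hcos : ∀ η : ℝ, Complex.cos (Complex.I * η) = (Real.cosh η : ℂ) := by
    intro η; rw [hIη, Complex.cos_mul_I, Complex.ofReal_cosh]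
  have habs_sin : ∀ η : ℝ, ‖Complex.sin (Complex.I * η)‖ = |Real.sinh η| := by
    intro η; rw [hsin, norm_mul, Complex.norm_I, mul_one, Complex.norm_real, Real.norm_eq_abs]
  have habs_cos : ∀ η : ℝ, ‖Complex.cos (Complex.I * η)‖ = Real.cosh η := by
    intro η; rw [hcos, Complex.norm_real, Real.norm_eq_abs, _root_.abs_of_nonneg (Real.cosh_pos η).le]
  have hre : ∀ η : ℝ, (Γ (Complex.I * η) 0).re = Real.cosh η ^ 4 + Real.sinh η ^ 4 + 1 := by
    intro η
    have : Γ (Complex.I * η) 0 = Complex.sin (Complex.I * η) ^ 4 + Complex.cos (Complex.I * η) ^ 4 + 1 := by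
      rw [hΓ]; rfl
    rw [this, hsin, hcos]
    have : ((Real.sinh η : ℂ) * Complex.I) ^ 4 = ((Real.sinh η ^ 4 : ℝ) : ℂ) := by
      push_cast; rw [mul_pow, Complex.I_pow_four, mul_one]
    rw [this, ← Complex.ofReal_pow, ← Complex.ofReal_one, ← Complex.ofReal_add,
      ← Complex.ofReal_add, Complex.ofReal_re]
    ring
  refine ⟨fun η => ?_, fun η hη θ => ?_, fun ε hε => ?_⟩
  · have h3 : 1 + (‖Complex.sin (Complex.I * η)‖) ^ 4
          + (‖Complex.cos (Complex.I * η)‖) ^ 4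
        = Real.cosh η ^ 4 + Real.sinh η ^ 4 + 1 := by
      rw [habs_sin, habs_cos]
      have : |Real.sinh η| ^ 4 = Real.sinh η ^ 4 := by
        rw [← _root_.abs_pow, _root_.abs_of_nonneg (by positivity)]
      rw [this]; ring
    refine ⟨by rw [hre, h3], hre η, h3, ?_⟩
    have h1 : Γ (Complex.I * η) 1 = 1 := by rw [hΓ]; rfl
    have h2 : Γ (Complex.I * η) 2 = Complex.sin (Complex.I * η) := by rw [hΓ]; rfl
    have h4 : Γ (Complex.I * η) 3 = Complex.cos (Complex.I * η) := by rw [hΓ]; rfl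
    rw [h1, h2, h4, hre η, habs_sin, habs_cos]
    have : |Real.sinh η| ^ 4 = Real.sinh η ^ 4 := by
      rw [← _root_.abs_pow, _root_.abs_of_nonneg (by positivity)]
    simp [this]; ring
  · intro h
    have h2 : Γ (Complex.I * η) 2 = γ θ 2 := by rw [h]
    rw [hΓ, hγ] at h2
    simp only [Matrix.cons_val_two, Matrix.tail_cons, Matrix.head_cons] at h2
    have := congrArg Complex.im h2
    rw [hsin] at this
    simp at this
    exact hη (Real.sinh_eq_zero.mp this)
  · have hcont : Filter.Tendsto (fun η : ℝ => Γ (Complex.I * η)) (nhds 0) (nhds (γ 0)) := by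
      have : (fun η : ℝ => Γ (Complex.I * η)) =
          fun η : ℝ => ![Complex.sin (Complex.I * η) ^ 4 + Complex.cos (Complex.I * η) ^ 4 + 1, 1,
            Complex.sin (Complex.I * η), Complex.cos (Complex.I * η)] := by
        funext η; rw [hΓ]
      rw [this, hγ]
      have h0 : (![((Real.sin 0 ^ 4 + Real.cos 0 ^ 4 + 1 : ℝ) : ℂ), 1,
          ((Real.sin 0 : ℝ) : ℂ), ((Real.cos 0 : ℝ) : ℂ)] : Fin 4 → ℂ) =
          ![Complex.sin (Complex.I * (0:ℝ)) ^ 4 + Complex.cos (Complex.I * (0:ℝ)) ^ 4 + 1, 1,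
            Complex.sin (Complex.I * (0:ℝ)), Complex.cos (Complex.I * (0:ℝ))] := by
        simp
      rw [h0]
      apply Continuous.tendsto
      refine continuous_pi fun i => ?_
      fin_cases i <;> simp <;> fun_prop
    have := Metric.tendsto_nhds.mp hcont ε hε
    rcases Metric.eventually_nhds_iff.mp this with ⟨δ, hδ, h⟩
    refine ⟨δ / 2, by positivity, h ?_⟩
    rw [Real.dist_eq, sub_zero, _root_.abs_of_nonneg (by positivity)]
    linarith
end

section
/- Let ρ : ℂ⁴ → ℝ be ρ(z) = |z₂|⁴ + |z₃|⁴ + |z₄|⁴ − Re z₁ and γ(θ) = ((2+cosθ)⁴ + (2+sinθ)⁴, 0, 2+sinθ, 2+cosθ). Then for every θ ∈ ℝ the Levi form of ρ at γ(θ) evaluated on i·γ′(θ) equals L_ρ(γ(θ))(i·γ′(θ)) = 4·cos²θ·(2+sinθ)² + 4·sin²θ·(2+cosθ)², and this quantity is strictly positive for every θ ∈ ℝ. (This is the positivity condition of the main theorem along the curve γ.) -/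
open Complex

noncomputable def Xc (j : Fin 4) : (Fin 4 → ℂ) →L[ℝ] ℝ :=
  Complex.reCLM.comp (ContinuousLinearMap.proj j)

noncomputable def Yc (j : Fin 4) : (Fin 4 → ℂ) →L[ℝ] ℝ :=
  Complex.imCLM.comp (ContinuousLinearMap.proj j)

lemma Xc_apply (j : Fin 4) (z : Fin 4 → ℂ) : Xc j z = (z j).re := rfl
lemma Yc_apply (j : Fin 4) (z : Fin 4 → ℂ) : Yc j z = (z j).im := rfl

lemma hasFDerivAt_Xc (j : Fin 4) (z : Fin 4 → ℂ) :
    HasFDerivAt (fun z : Fin 4 → ℂ => (z j).re) (Xc j) z := (Xc j).hasFDerivAt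

lemma hasFDerivAt_Yc (j : Fin 4) (z : Fin 4 → ℂ) :
    HasFDerivAt (fun z : Fin 4 → ℂ => (z j).im) (Yc j) z := (Yc j).hasFDerivAt

lemma rho_eq (ρ : (Fin 4 → ℂ) → ℝ)
    (hρ : ∀ z : Fin 4 → ℂ,
      ρ z = (‖z 1‖) ^ 4 + (‖z 2‖) ^ 4 + (‖z 3‖) ^ 4
              - (z 0).re) :
    ρ = fun z : Fin 4 → ℂ =>
      ((z 1).re * (z 1).re + (z 1).im * (z 1).im) * ((z 1).re * (z 1).re + (z 1).im * (z 1).im)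
      + ((z 2).re * (z 2).re + (z 2).im * (z 2).im) * ((z 2).re * (z 2).re + (z 2).im * (z 2).im)
      + ((z 3).re * (z 3).re + (z 3).im * (z 3).im) * ((z 3).re * (z 3).re + (z 3).im * (z 3).im)
      - (z 0).re := by
  funext z
  rw [hρ]
  have h : ∀ w : ℂ, (‖w‖) ^ 4 = (w.re * w.re + w.im * w.im) * (w.re * w.re + w.im * w.im) := by
    intro w
    rw [show (4 : ℕ) = 2 * 2 by norm_num, pow_mul, Complex.sq_norm, Complex.normSq_apply]
    ring
  rw [h, h, h]

lemma fderiv_rho_apply (ρ : (Fin 4 → ℂ) → ℝ)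
    (hρ : ∀ z : Fin 4 → ℂ,
      ρ z = (‖z 1‖) ^ 4 + (‖z 2‖) ^ 4 + (‖z 3‖) ^ 4
              - (z 0).re) (z u : Fin 4 → ℂ) :
    fderiv ℝ ρ z u =
      4 * ((z 1).re * (z 1).re + (z 1).im * (z 1).im) * ((z 1).re * (u 1).re + (z 1).im * (u 1).im)
      + 4 * ((z 2).re * (z 2).re + (z 2).im * (z 2).im) * ((z 2).re * (u 2).re + (z 2).im * (u 2).im)
      + 4 * ((z 3).re * (z 3).re + (z 3).im * (z 3).im) * ((z 3).re * (u 3).re + (z 3).im * (u 3).im)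
      - (u 0).re := by
  have hn : ∀ j : Fin 4, HasFDerivAt
      (fun z : Fin 4 → ℂ => (z j).re * (z j).re + (z j).im * (z j).im)
      (((z j).re • Xc j + (z j).re • Xc j) + ((z j).im • Yc j + (z j).im • Yc j)) z :=
    fun j => ((hasFDerivAt_Xc j z).mul (hasFDerivAt_Xc j z)).add
      ((hasFDerivAt_Yc j z).mul (hasFDerivAt_Yc j z))
  have h := ((((hn 1).mul (hn 1)).add ((hn 2).mul (hn 2))).add ((hn 3).mul (hn 3))).sub
    (hasFDerivAt_Xc 0 z)
  rw [rho_eq ρ hρ]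
  erw [h.fderiv]
  simp only [ContinuousLinearMap.coe_sub', ContinuousLinearMap.coe_add', Pi.sub_apply,
    Pi.add_apply, ContinuousLinearMap.coe_smul', Pi.smul_apply, Xc_apply, Yc_apply,
    smul_eq_mul]
  ring

lemma fderiv_phi (u p v : Fin 4 → ℂ) :
    fderiv ℝ (fun z : Fin 4 → ℂ =>
      4 * ((z 1).re * (z 1).re + (z 1).im * (z 1).im) * ((z 1).re * (u 1).re + (z 1).im * (u 1).im)
      + 4 * ((z 2).re * (z 2).re + (z 2).im * (z 2).im) * ((z 2).re * (u 2).re + (z 2).im * (u 2).im)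
      + 4 * ((z 3).re * (z 3).re + (z 3).im * (z 3).im) * ((z 3).re * (u 3).re + (z 3).im * (u 3).im)
      - (u 0).re) p v =
      (8 * ((p 1).re * (v 1).re + (p 1).im * (v 1).im) * ((p 1).re * (u 1).re + (p 1).im * (u 1).im)
        + 4 * ((p 1).re * (p 1).re + (p 1).im * (p 1).im) * ((v 1).re * (u 1).re + (v 1).im * (u 1).im))
      + (8 * ((p 2).re * (v 2).re + (p 2).im * (v 2).im) * ((p 2).re * (u 2).re + (p 2).im * (u 2).im)
        + 4 * ((p 2).re * (p 2).re + (p 2).im * (p 2).im) * ((v 2).re * (u 2).re + (v 2).im * (u 2).im))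
      + (8 * ((p 3).re * (v 3).re + (p 3).im * (v 3).im) * ((p 3).re * (u 3).re + (p 3).im * (u 3).im)
        + 4 * ((p 3).re * (p 3).re + (p 3).im * (p 3).im) * ((v 3).re * (u 3).re + (v 3).im * (u 3).im)) := by
  have hn : ∀ j : Fin 4, HasFDerivAt
      (fun z : Fin 4 → ℂ => (z j).re * (z j).re + (z j).im * (z j).im)
      (((p j).re • Xc j + (p j).re • Xc j) + ((p j).im • Yc j + (p j).im • Yc j)) p :=
    fun j => ((hasFDerivAt_Xc j p).mul (hasFDerivAt_Xc j p)).add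
      ((hasFDerivAt_Yc j p).mul (hasFDerivAt_Yc j p))
  have hB : ∀ j : Fin 4, HasFDerivAt
      (fun z : Fin 4 → ℂ => (z j).re * (u j).re + (z j).im * (u j).im)
      ((u j).re • Xc j + (u j).im • Yc j) p :=
    fun j => ((hasFDerivAt_Xc j p).mul_const (u j).re).add
      ((hasFDerivAt_Yc j p).mul_const (u j).im)
  have hj : ∀ j : Fin 4, HasFDerivAt
      (fun z : Fin 4 → ℂ =>
        4 * ((z j).re * (z j).re + (z j).im * (z j).im) * ((z j).re * (u j).re + (z j).im * (u j).im))
      _ p := fun j => ((hn j).const_mul (4 : ℝ)).mul (hB j)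
  have h := (((hj 1).add (hj 2)).add (hj 3)).sub (hasFDerivAt_const (u 0).re p)
  erw [h.fderiv]
  simp only [ContinuousLinearMap.coe_sub', ContinuousLinearMap.coe_add', Pi.sub_apply,
    Pi.add_apply, ContinuousLinearMap.coe_smul', Pi.smul_apply, Xc_apply, Yc_apply,
    smul_eq_mul, ContinuousLinearMap.zero_apply]
  ring

lemma contDiff_rho (ρ : (Fin 4 → ℂ) → ℝ)
    (hρ : ∀ z : Fin 4 → ℂ,
      ρ z = (‖z 1‖) ^ 4 + (‖z 2‖) ^ 4 + (‖z 3‖) ^ 4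
              - (z 0).re) : ContDiff ℝ 2 ρ := by
  rw [rho_eq ρ hρ]
  have hre : ∀ j : Fin 4, ContDiff ℝ 2 (fun z : Fin 4 → ℂ => (z j).re) := fun j => (Xc j).contDiff
  have him : ∀ j : Fin 4, ContDiff ℝ 2 (fun z : Fin 4 → ℂ => (z j).im) := fun j => (Yc j).contDiff
  have hn : ∀ j : Fin 4, ContDiff ℝ 2
      (fun z : Fin 4 → ℂ => (z j).re * (z j).re + (z j).im * (z j).im) :=
    fun j => ((hre j).mul (hre j)).add ((him j).mul (him j))
  exact ((((hn 1).mul (hn 1)).add ((hn 2).mul (hn 2))).add ((hn 3).mul (hn 3))).sub (hre 0)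

lemma iterated_eq (ρ : (Fin 4 → ℂ) → ℝ)
    (hρ : ∀ z : Fin 4 → ℂ,
      ρ z = (‖z 1‖) ^ 4 + (‖z 2‖) ^ 4 + (‖z 3‖) ^ 4
              - (z 0).re) (p w : Fin 4 → ℂ) :
    iteratedFDeriv ℝ 2 ρ p ![w, w] =
      (8 * ((p 1).re * (w 1).re + (p 1).im * (w 1).im) ^ 2
        + 4 * ((p 1).re ^ 2 + (p 1).im ^ 2) * ((w 1).re ^ 2 + (w 1).im ^ 2))
      + (8 * ((p 2).re * (w 2).re + (p 2).im * (w 2).im) ^ 2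
        + 4 * ((p 2).re ^ 2 + (p 2).im ^ 2) * ((w 2).re ^ 2 + (w 2).im ^ 2))
      + (8 * ((p 3).re * (w 3).re + (p 3).im * (w 3).im) ^ 2
        + 4 * ((p 3).re ^ 2 + (p 3).im ^ 2) * ((w 3).re ^ 2 + (w 3).im ^ 2)) := by
  have hdiff : DifferentiableAt ℝ (fderiv ℝ ρ) p :=
    (((contDiff_rho ρ hρ).fderiv_right (m := 1) (by norm_num)).differentiable (by norm_num)).differentiableAt
  rw [iteratedFDeriv_two_apply]
  simp only [Matrix.cons_val_zero, Matrix.cons_val_one, Matrix.head_cons]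
  have h1 : fderiv ℝ (fun z => fderiv ℝ ρ z w) p w = fderiv ℝ (fderiv ℝ ρ) p w w := by
    rw [fderiv_clm_apply hdiff (differentiableAt_const w)]
    simp
  rw [← h1]
  have h2 : (fun z => fderiv ℝ ρ z w) = fun z : Fin 4 → ℂ =>
      4 * ((z 1).re * (z 1).re + (z 1).im * (z 1).im) * ((z 1).re * (w 1).re + (z 1).im * (w 1).im)
      + 4 * ((z 2).re * (z 2).re + (z 2).im * (z 2).im) * ((z 2).re * (w 2).re + (z 2).im * (w 2).im)
      + 4 * ((z 3).re * (z 3).re + (z 3).im * (z 3).im) * ((z 3).re * (w 3).re + (z 3).im * (w 3).im)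
      - (w 0).re := funext fun z => fderiv_rho_apply ρ hρ z w
  rw [h2, fderiv_phi w p w]
  ring


/-- Along `γ(θ) = ((2+cosθ)⁴ + (2+sinθ)⁴, 0, 2+sinθ, 2+cosθ)`, the Levi form of `ρ`
evaluated on `i·γ'(θ)` equals `4cos²θ(2+sinθ)² + 4sin²θ(2+cosθ)²`, which is strictly
positive for every `θ` (the positivity condition of the main theorem). -/
theorem stmt_8 (ρ : (Fin 4 → ℂ) → ℝ)
    (hρ : ∀ z : Fin 4 → ℂ,
      ρ z = (‖z 1‖) ^ 4 + (‖z 2‖) ^ 4 + (‖z 3‖) ^ 4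
              - (z 0).re)
    (γ : ℝ → Fin 4 → ℂ)
    (hγ : ∀ θ : ℝ, γ θ =
      ![(((2 + Real.cos θ) ^ 4 + (2 + Real.sin θ) ^ 4 : ℝ) : ℂ), 0,
        ((2 + Real.sin θ : ℝ) : ℂ), ((2 + Real.cos θ : ℝ) : ℂ)])
    (γ' : ℝ → Fin 4 → ℂ)
    (hγ' : ∀ θ : ℝ, γ' θ =
      ![((-4 * Real.sin θ * (2 + Real.cos θ) ^ 3
          + 4 * Real.cos θ * (2 + Real.sin θ) ^ 3 : ℝ) : ℂ), 0,
        ((Real.cos θ : ℝ) : ℂ), ((-Real.sin θ : ℝ) : ℂ)]) :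
    ∀ θ : ℝ,
      leviForm ρ (γ θ) (Complex.I • γ' θ)
          = 4 * Real.cos θ ^ 2 * (2 + Real.sin θ) ^ 2
            + 4 * Real.sin θ ^ 2 * (2 + Real.cos θ) ^ 2 ∧
      0 < leviForm ρ (γ θ) (Complex.I • γ' θ) := by
  intro θ
  have key : leviForm ρ (γ θ) (Complex.I • γ' θ)
      = 4 * Real.cos θ ^ 2 * (2 + Real.sin θ) ^ 2
        + 4 * Real.sin θ ^ 2 * (2 + Real.cos θ) ^ 2 := by
    unfold leviForm
    rw [hγ θ, hγ' θ, iterated_eq ρ hρ, iterated_eq ρ hρ]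
    simp only [Matrix.cons_val_zero, Matrix.cons_val_one, Matrix.head_cons,
      Matrix.cons_val_two, Matrix.tail_cons, Matrix.cons_val_three,
      Pi.smul_apply, smul_eq_mul, Complex.mul_re, Complex.mul_im,
      Complex.I_re, Complex.I_im, Complex.ofReal_re, Complex.ofReal_im,
      Complex.zero_re, Complex.zero_im]
    ring
  refine ⟨key, key ▸ ?_⟩
  have hs : (1:ℝ) ≤ (2 + Real.sin θ) ^ 2 := by
    nlinarith [Real.neg_one_le_sin θ, Real.sin_le_one θ]
  have hc : (1:ℝ) ≤ (2 + Real.cos θ) ^ 2 := by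
    nlinarith [Real.neg_one_le_cos θ, Real.cos_le_one θ]
  nlinarith [Real.sin_sq_add_cos_sq θ,
    mul_le_mul_of_nonneg_left hs (sq_nonneg (Real.cos θ)),
    mul_le_mul_of_nonneg_left hc (sq_nonneg (Real.sin θ))]
end

section
/- (Core of Proposition 4.1.) Let n ≥ 1, let 0 < r < 1, let A = {ζ ∈ ℂ : 1−r < |ζ| < 1+r} and S¹ = {ζ ∈ ℂ : |ζ| = 1}. Let Ψ : A → ℂⁿ be holomorphic, let K ⊆ ℂⁿ, and suppose: ζ₀ ∈ A with |ζ₀| ≠ 1; Ψ(ζ₀) ∈ K; Ψ(S¹) ⊆ K; and there exists a connected set L ⊆ {ζ ∈ A : Ψ(ζ) ∈ K} that contains ζ₀ and has nonempty intersection with S¹. Then there do NOT exist an open set D ⊆ ℂⁿ with K ⊆ D and a holomorphic function G : D → ℂ such that G(Ψ(ζ)) = 1/(ζ − ζ₀) for all ζ ∈ S¹. -/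
open Complex

/-- Core of Proposition 4.1: if `Ψ` is holomorphic on the annulus
`A = {1-r < |ζ| < 1+r}`, maps the unit circle into `K`, maps some `ζ₀ ∈ A` with
`|ζ₀| ≠ 1` into `K`, and there is a connected set `L ⊆ {ζ ∈ A : Ψ(ζ) ∈ K}` containing
`ζ₀` and meeting the unit circle, then no function `G` holomorphic on an open
neighbourhood of `K` can satisfy `G(Ψ(ζ)) = 1/(ζ - ζ₀)` on the unit circle. -/
theorem stmt_10 (n : ℕ) (hn : 1 ≤ n) (r : ℝ) (hr0 : 0 < r) (hr1 : r < 1)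
    (A : Set ℂ) (hA : A = {ζ : ℂ | 1 - r < ‖ζ‖ ∧ ‖ζ‖ < 1 + r})
    (Ψ : ℂ → Fin n → ℂ) (hΨ : DifferentiableOn ℂ Ψ A)
    (K : Set (Fin n → ℂ))
    (ζ₀ : ℂ) (hζ₀A : ζ₀ ∈ A) (hζ₀ : ‖ζ₀‖ ≠ 1) (hΨζ₀ : Ψ ζ₀ ∈ K)
    (hΨS : ∀ ζ : ℂ, ‖ζ‖ = 1 → Ψ ζ ∈ K)
    (L : Set ℂ) (hLconn : IsConnected L)
    (hLsub : L ⊆ {ζ : ℂ | ζ ∈ A ∧ Ψ ζ ∈ K})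
    (hζ₀L : ζ₀ ∈ L) (hLS : ∃ ζ ∈ L, ‖ζ‖ = 1) :
    ¬ ∃ (D : Set (Fin n → ℂ)) (G : (Fin n → ℂ) → ℂ),
        IsOpen D ∧ K ⊆ D ∧ DifferentiableOn ℂ G D ∧
        ∀ ζ : ℂ, ‖ζ‖ = 1 → G (Ψ ζ) = 1 / (ζ - ζ₀) := by
  rintro ⟨D, G, hDopen, hKD, hG, hGΨ⟩
  -- A is open
  have hAopen : IsOpen A := by
    rw [hA]
    have : {ζ : ℂ | 1 - r < ‖ζ‖ ∧ ‖ζ‖ < 1 + r}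
        = (fun ζ : ℂ => ‖ζ‖) ⁻¹' (Set.Ioo (1 - r) (1 + r)) := rfl
    rw [this]
    exact (isOpen_Ioo).preimage continuous_norm
  -- the set V = A ∩ Ψ⁻¹ D is open
  set V : Set ℂ := A ∩ Ψ ⁻¹' D with hV
  have hVopen : IsOpen V := hΨ.continuousOn.isOpen_inter_preimage hAopen hDopen
  -- the circle is contained in V
  have hSA : ∀ ζ : ℂ, ‖ζ‖ = 1 → ζ ∈ A := by
    intro ζ hζ
    rw [hA]; constructor <;> rw [hζ] <;> linarith
  have hSV : ∀ ζ : ℂ, ‖ζ‖ = 1 → ζ ∈ V := fun ζ hζ =>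
    ⟨hSA ζ hζ, hKD (hΨS ζ hζ)⟩
  have hζ₀V : ζ₀ ∈ V := ⟨hζ₀A, hKD hΨζ₀⟩
  -- the connected component of V containing ζ₀
  set W : Set ℂ := connectedComponentIn V ζ₀ with hW
  have hWopen : IsOpen W := hVopen.connectedComponentIn
  have hWconn : IsPreconnected W := (isConnected_connectedComponentIn_iff.2 hζ₀V).isPreconnected
  have hWV : W ⊆ V := connectedComponentIn_subset V ζ₀
  have hζ₀W : ζ₀ ∈ W := mem_connectedComponentIn hζ₀V
  -- L ⊆ V, hence L ⊆ W
  have hLV : L ⊆ V := fun ζ hζ => ⟨(hLsub hζ).1, hKD (hLsub hζ).2⟩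
  have hLW : L ⊆ W := hLconn.isPreconnected.subset_connectedComponentIn hζ₀L hLV
  obtain ⟨z₁, hz₁L, hz₁S⟩ := hLS
  have hz₁W : z₁ ∈ W := hLW hz₁L
  -- the auxiliary function F = (ζ - ζ₀) * G(Ψ ζ) - 1
  set F : ℂ → ℂ := fun ζ => (ζ - ζ₀) * G (Ψ ζ) - 1 with hF
  have hFd : DifferentiableOn ℂ F W := by
    have hGΨd : DifferentiableOn ℂ (fun ζ => G (Ψ ζ)) W := by
      apply hG.comp (hΨ.mono fun ζ hζ => (hWV hζ).1)
      exact fun ζ hζ => (hWV hζ).2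
    exact (((differentiable_id.sub_const ζ₀).differentiableOn).mul hGΨd).sub
      (differentiableOn_const 1)
  have hFan : AnalyticOnNhd ℂ F W := hFd.analyticOnNhd hWopen
  -- F vanishes on the unit circle
  have hFS : ∀ ζ : ℂ, ‖ζ‖ = 1 → F ζ = 0 := by
    intro ζ hζ
    have hne : ζ - ζ₀ ≠ 0 := by
      intro h
      apply hζ₀
      rw [sub_eq_zero] at h
      rw [← h, hζ]
    simp only [hF, hGΨ ζ hζ]
    field_simp
    norm_num
  -- F vanishes frequently near z₁ (circle points accumulate at z₁)
  have hfreq : ∃ᶠ z in nhdsWithin z₁ {z₁}ᶜ, F z = 0 := by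
    set t : ℕ → ℝ := fun k => 1 / (k + 1) with ht
    have htpos : ∀ k, 0 < t k := fun k => by positivity
    have htle : ∀ k, t k ≤ 1 := by
      intro k
      rw [ht]
      rw [div_le_one (by positivity)]
      have : (0 : ℝ) ≤ (k : ℝ) := Nat.cast_nonneg k
      linarith
    set u : ℕ → ℂ := fun k => z₁ * Complex.exp ((t k : ℂ) * Complex.I) with hu
    have habs : ∀ k, ‖u k‖ = 1 := by
      intro k
      rw [hu]
      simp [norm_mul, hz₁S, Complex.norm_exp_ofReal_mul_I]
    have hne : ∀ k, u k ≠ z₁ := by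
      intro k h
      have hz₁ne : z₁ ≠ 0 := by
        intro h0; rw [h0] at hz₁S; simp at hz₁S
      have hexp1 : Complex.exp ((t k : ℂ) * Complex.I) = 1 := by
        have := h
        rw [hu] at this
        nth_rewrite 2 [show z₁ = z₁ * 1 by ring] at this
        exact mul_left_cancel₀ hz₁ne this
      rw [Complex.exp_eq_one_iff] at hexp1
      obtain ⟨m, hm⟩ := hexp1
      have hre : t k = (m : ℝ) * (2 * Real.pi) := by
        have h2 : ((t k : ℂ)) * Complex.I = ((m : ℝ) * (2 * Real.pi) : ℝ) * Complex.I := by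
          rw [hm]; push_cast; ring
        have := mul_right_cancel₀ Complex.I_ne_zero h2
        exact_mod_cast this
      have hpos := htpos k
      have hle := htle k
      rcases lt_trichotomy m 0 with hm0 | hm0 | hm0
      · have hm1 : m ≤ -1 := by omega
        have : (m : ℝ) ≤ -1 := by exact_mod_cast hm1
        nlinarith [Real.pi_gt_three]
      · rw [hm0] at hre; simp at hre; linarith
      · have : (1 : ℝ) ≤ (m : ℝ) := by exact_mod_cast hm0
        nlinarith [Real.pi_gt_three]
    have htend : Filter.Tendsto u Filter.atTop (nhdsWithin z₁ {z₁}ᶜ) := by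
      apply tendsto_nhdsWithin_of_tendsto_nhds_of_eventually_within
      · have h1 : Filter.Tendsto t Filter.atTop (nhds 0) :=
          tendsto_one_div_add_atTop_nhds_zero_nat
        have h2 : Filter.Tendsto (fun k : ℕ => ((t k : ℂ)) * Complex.I)
            Filter.atTop (nhds 0) := by
          have h0 : Filter.Tendsto (fun k : ℕ => ((t k : ℝ) : ℂ)) Filter.atTop (nhds 0) := by
            simpa [Function.comp_def] using (Complex.continuous_ofReal.tendsto 0).comp h1
          simpa using h0.mul_const Complex.I
        have h3 : Filter.Tendsto u Filter.atTop (nhds (z₁ * Complex.exp 0)) :=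
          Filter.Tendsto.const_mul z₁ ((Complex.continuous_exp.tendsto 0).comp h2)
        simpa using h3
      · exact Filter.Eventually.of_forall fun k => hne k
    exact htend.frequently (Filter.Eventually.of_forall fun k => hFS _ (habs k)).frequently
  -- identity theorem: F vanishes on W
  have hFzero : Set.EqOn F 0 W :=
    hFan.eqOn_zero_of_preconnected_of_frequently_eq_zero hWconn hz₁W hfreq
  have := hFzero hζ₀W
  simp [hF] at this
end

section
/- Let C > 0 and let Ω = {(z,w) ∈ ℂ² : z ≠ 0 and |w + exp(i·log(|z|²))|² + C·(log(|z|²))⁴ < 1}, where log denotes the real logarithm of the positive real number |z|². Then for every z ∈ ℂ with z ≠ 0: the point (z, 0) belongs to the topological closure of Ω if and only if |z| = 1. (Thus the complexification of the circle M = {(z,0) : |z| = 1} ⊆ ∂Ω, namely the complex curve {(z,0) : z ≠ 0}, meets the closure of Ω exactly along M.) -/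
open Complex

/-- For the domain `Ω = {(z,w) : z ≠ 0, |w + e^{i log|z|²}|² + C (log|z|²)⁴ < 1}` of
Example 4.5 (with `C > 0`), a point `(z, 0)` with `z ≠ 0` lies in the closure of `Ω` iff
`|z| = 1`; thus the complex curve `{(z,0) : z ≠ 0}` (the complexification of the circle
`M = {(z,0) : |z| = 1}`) meets the closure of `Ω` exactly along `M`. -/
theorem stmt_12 (C : ℝ) (hC : 0 < C)
    (Ω : Set (ℂ × ℂ))
    (hΩ : Ω = {p : ℂ × ℂ | p.1 ≠ 0 ∧
      (‖p.2 + Complex.exp (Complex.I * (Real.log ((‖p.1‖) ^ 2) : ℂ))‖) ^ 2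
        + C * (Real.log ((‖p.1‖) ^ 2)) ^ 4 < 1}) :
    ∀ z : ℂ, z ≠ 0 → (((z, (0 : ℂ)) ∈ closure Ω) ↔ ‖z‖ = 1) := by
  intro z hz
  set g : ℂ × ℂ → ℝ := fun p =>
    (‖p.2 + Complex.exp (Complex.I * (Real.log ((‖p.1‖) ^ 2) : ℂ))‖) ^ 2
      + C * (Real.log ((‖p.1‖) ^ 2)) ^ 4 with hg
  have habsz : (0:ℝ) < ‖z‖ := norm_pos_iff.mpr hz
  constructor
  · intro hcl
    -- continuity of g at (z,0)
    have hcont : ContinuousAt g (z, 0) := by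
      have h1 : ContinuousAt (fun p : ℂ × ℂ => Real.log ((‖p.1‖) ^ 2)) (z, 0) := by
        apply ContinuousAt.comp (Real.continuousAt_log (by positivity))
        exact ((continuous_norm.comp continuous_fst).pow 2).continuousAt
      apply ContinuousAt.add
      · apply ContinuousAt.pow
        apply continuous_norm.continuousAt.comp
        apply ContinuousAt.add (by fun_prop)
        exact Complex.continuous_exp.continuousAt.comp
          (ContinuousAt.mul continuousAt_const (continuous_ofReal.continuousAt.comp h1))
      · exact ContinuousAt.mul continuousAt_const (h1.pow 4)
    have hfreq : ∃ᶠ p in nhds (z, (0:ℂ)), p ∈ Ω := mem_closure_iff_frequently.mp hcl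
    have hle : g (z, 0) ≤ 1 := by
      by_contra h
      push_neg at h
      have hev : ∀ᶠ p in nhds (z, (0:ℂ)), 1 < g p :=
        ContinuousAt.eventually_lt continuousAt_const hcont h
      have := hfreq.and_eventually hev
      obtain ⟨p, hpΩ, hpg⟩ := this.exists
      rw [hΩ] at hpΩ
      exact absurd hpΩ.2 (not_lt.mpr hpg.le)
    -- compute g (z,0)
    have habs1 : ‖(0:ℂ) + Complex.exp (Complex.I * (Real.log ((‖z‖) ^ 2) : ℂ))‖ = 1 := by
      rw [zero_add, Complex.norm_exp]
      simp
    have : (1:ℝ) + C * (Real.log ((‖z‖) ^ 2)) ^ 4 ≤ 1 := by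
      have := hle
      simp only [hg] at this
      rw [habs1] at this
      simpa using this
    have hL4 : (Real.log ((‖z‖) ^ 2)) ^ 4 ≤ 0 := by nlinarith
    have hL4' : (Real.log ((‖z‖) ^ 2)) ^ 4 = 0 :=
      le_antisymm hL4 (by positivity)
    have hL : Real.log ((‖z‖) ^ 2) = 0 :=
      pow_eq_zero_iff (by norm_num) |>.mp hL4'
    have : (‖z‖) ^ 2 = 1 := by
      rcases Real.log_eq_zero.mp hL with h | h | h
      · nlinarith
      · exact h
      · nlinarith
    nlinarith
  · intro h1
    have hL : Real.log ((‖z‖) ^ 2) = 0 := by rw [h1]; simp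
    have htend : Filter.Tendsto (fun n : ℕ => ((z, (-(1/(n+1) : ℝ) : ℂ)) : ℂ × ℂ))
        Filter.atTop (nhds (z, (0:ℂ))) := by
      apply Filter.Tendsto.prodMk_nhds tendsto_const_nhds
      have : Filter.Tendsto (fun n : ℕ => (1/(n+1) : ℝ)) Filter.atTop (nhds 0) :=
        tendsto_one_div_add_atTop_nhds_zero_nat
      have h2 : Filter.Tendsto (fun n : ℕ => (-(1/(n+1):ℝ))) Filter.atTop (nhds 0) := by
        simpa using this.neg
      have h3 := (Complex.continuous_ofReal.tendsto 0).comp h2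
      simp only [Function.comp_def] at h3
      push_cast at h3 ⊢
      exact h3
    apply mem_closure_of_tendsto htend
    filter_upwards with n
    rw [hΩ]
    refine ⟨hz, ?_⟩
    simp only [hL]
    have hpos : (0:ℝ) < 1/(n+1 : ℝ) := by positivity
    have hle1 : (1/(n+1 : ℝ)) ≤ 1 := by
      rw [div_le_one (by positivity)]; linarith [Nat.cast_nonneg (α := ℝ) n]
    have habs : ‖(-(1/(n+1) : ℝ) : ℂ) + Complex.exp (Complex.I * ((0:ℝ):ℂ))‖
        = 1 - 1/(n+1 : ℝ) := by
      have heq : ((-(1/(n+1) : ℝ) : ℂ) + Complex.exp (Complex.I * ((0:ℝ):ℂ)))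
          = ((1 - 1/((n:ℝ)+1) : ℝ) : ℂ) := by
        rw [Complex.ofReal_zero, mul_zero, Complex.exp_zero]; push_cast; ring
      rw [heq, Complex.norm_real, Real.norm_eq_abs]
      exact abs_of_nonneg (by linarith)
    rw [habs]
    have : (1 - 1/(n+1:ℝ))^2 < 1 := by nlinarith
    simpa using this
end
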